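/- arXiv:2107.09746 — 5 statements merged into one kernel-verified Lean document; each statement's English description precedes it below -/
import Mathlib

section
/- Let N be a finite set and let a, b : N → ℝ be 0–1 valued vectors with ∑_{k∈N} a_k = 1 and ∑_{m∈N} b_m = 1 (i.e., a and b are unit coordinate vectors). If x : N × N → ℝ satisfies x_{km} ≥ 0 for all k,m, ∑_{m∈N} x_{km} = a_k for every k, and ∑_{k∈N} x_{km} = b_m for every m, then x_{km} = a_k · b_m for all k,m. In particular, for a binary assignment vector z satisfying the assignment equalities, the flow constraints (10)–(11) of the reduced RLT reformulation RL_2 force the linearization variables to equal the products x_{ikjm} = z_{ik} z_{jm}, so constraints (10)–(11) alone give a valid linearization of the bilinear terms. -/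
open Finset

/-- If `a` and `b` are 0–1 valued vectors each summing to 1 (unit coordinate vectors) and
`x` is a nonnegative matrix with row sums `a` and column sums `b`, then `x` is the
product `a ⊗ b`; in particular the RLT flow constraints (10)–(11) of `RL₂` force the
linearization variables to equal the bilinear products. -/
theorem rlt_flow_constraints_force_products
    {N : Type*} [Fintype N] (a b : N → ℝ)
    (ha01 : ∀ k, a k = 0 ∨ a k = 1) (hb01 : ∀ m, b m = 0 ∨ b m = 1)
    (hasum : ∑ k, a k = 1) (hbsum : ∑ m, b m = 1)
    (x : N → N → ℝ)
    (hxnn : ∀ k m, 0 ≤ x k m)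
    (hrow : ∀ k, ∑ m, x k m = a k)
    (hcol : ∀ m, ∑ k, x k m = b m) :
    ∀ k m, x k m = a k * b m := by
  classical
  intro k m
  rcases ha01 k with hak | hak
  · -- row sum is 0, all entries nonneg, so x k m = 0
    have h0 : ∑ m', x k m' = 0 := by rw [hrow k, hak]
    have := (Finset.sum_eq_zero_iff_of_nonneg (fun m' _ => hxnn k m')).mp h0 m
      (Finset.mem_univ m)
    rw [this, hak, zero_mul]
  · rcases hb01 m with hbm | hbm
    · have h0 : ∑ k', x k' m = 0 := by rw [hcol m, hbm]
      have := (Finset.sum_eq_zero_iff_of_nonneg (fun k' _ => hxnn k' m)).mp h0 k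
        (Finset.mem_univ k)
      rw [this, hbm, mul_zero]
    · -- a k = 1, b m = 1 : show x k m = 1
      -- first, b m' = 0 for m' ≠ m
      have hbrest : ∑ m' ∈ Finset.univ.erase m, b m' = 0 := by
        have := Finset.add_sum_erase Finset.univ b (Finset.mem_univ m)
        rw [hbsum, hbm] at this
        linarith
      have hb0 : ∀ m' ≠ m, b m' = 0 := by
        intro m' hm'
        have hnn : ∀ i ∈ Finset.univ.erase m, 0 ≤ b i := by
          intro i _
          rcases hb01 i with h | h <;> rw [h] <;> norm_num
        exact (Finset.sum_eq_zero_iff_of_nonneg hnn).mp hbrest m'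
          (Finset.mem_erase.mpr ⟨hm', Finset.mem_univ m'⟩)
      -- then x k m' = 0 for m' ≠ m (column m' sums to 0)
      have hx0 : ∀ m' ≠ m, x k m' = 0 := by
        intro m' hm'
        have h0 : ∑ k', x k' m' = 0 := by rw [hcol m', hb0 m' hm']
        exact (Finset.sum_eq_zero_iff_of_nonneg (fun k' _ => hxnn k' m')).mp h0 k
          (Finset.mem_univ k)
      have := Finset.add_sum_erase Finset.univ (x k) (Finset.mem_univ m)
      rw [hrow k, hak] at this
      have hzero : ∑ m' ∈ Finset.univ.erase m, x k m' = 0 :=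
        Finset.sum_eq_zero (fun m' hm' => hx0 m' (Finset.mem_erase.mp hm').1)
      rw [hak, hbm, mul_one]
      linarith
end

section
/- Let N = Fin n and let f, c, q, d, b, p be the data of a QCpLP instance. If z ∈ Z is a feasible binary solution and x (indexed by i < j and k, m ∈ N) is nonnegative and satisfies ∑_{k∈N} x_{ikjm} = z_{jm} for all i < j and m, and ∑_{m∈N} x_{ikjm} = z_{ik} for all i < j and k, then x_{ikjm} = z_{ik} z_{jm} for all i < j, k, m, and consequently the linear objective ∑_k f_k z_{kk} + ∑_{i,k} c_{ik} z_{ik} + ∑_{i<j}∑_{k,m} q_{ikjm} x_{ikjm} of RL_2 equals the quadratic objective F(z) of QF. Hence, when Z is nonempty, the optimal value of the reduced linearized formulation RL_2 equals the optimal value of the binary quadratic program QF. -/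
open Finset

/-- The feasible set `Z` of the QCpLP: binary assignments with unit row sums, linking
constraints, a cardinality constraint on the number of open facilities, and capacity
constraints. -/
def QCpLPFeasible (n : ℕ) (d b : Fin n → ℝ) (p : ℕ) (z : Fin n → Fin n → ℝ) : Prop :=
  (∀ i k, z i k = 0 ∨ z i k = 1) ∧
  (∀ i, ∑ k, z i k = 1) ∧
  (∀ i k, i ≠ k → z i k ≤ z k k) ∧
  (∑ k, z k k ≤ (p : ℝ)) ∧
  (∀ k, ∑ i ∈ Finset.univ.filter (fun i => i ≠ k), d i * z i k ≤ (b k - d k) * z k k)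

/-- The quadratic objective of the binary quadratic program QF. -/
def QFObjective (n : ℕ) (f : Fin n → ℝ) (c : Fin n → Fin n → ℝ)
    (q : Fin n → Fin n → Fin n → Fin n → ℝ) (z : Fin n → Fin n → ℝ) : ℝ :=
  ∑ k, f k * z k k + ∑ i, ∑ k, c i k * z i k +
    ∑ i, ∑ j ∈ Finset.univ.filter (fun j => i < j), ∑ k, ∑ m,
      q i k j m * (z i k * z j m)

/-- The linearized objective of the reduced RLT reformulation `RL₂`. -/
def RL2Objective (n : ℕ) (f : Fin n → ℝ) (c : Fin n → Fin n → ℝ)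
    (q : Fin n → Fin n → Fin n → Fin n → ℝ) (z : Fin n → Fin n → ℝ)
    (x : Fin n → Fin n → Fin n → Fin n → ℝ) : ℝ :=
  ∑ k, f k * z k k + ∑ i, ∑ k, c i k * z i k +
    ∑ i, ∑ j ∈ Finset.univ.filter (fun j => i < j), ∑ k, ∑ m, q i k j m * x i k j m

/-- The constraints of `RL₂` on the linearization variables `x`: nonnegativity and the
flow constraints (10)–(11). -/
def RL2Constraints (n : ℕ) (z : Fin n → Fin n → ℝ)
    (x : Fin n → Fin n → Fin n → Fin n → ℝ) : Prop :=
  (∀ i j : Fin n, i < j → ∀ k m, 0 ≤ x i k j m) ∧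
  (∀ i j : Fin n, i < j → ∀ m, ∑ k, x i k j m = z j m) ∧
  (∀ i j : Fin n, i < j → ∀ k, ∑ m, x i k j m = z i k)

lemma rl2_aux
    (n : ℕ) (f : Fin n → ℝ) (c : Fin n → Fin n → ℝ)
    (q : Fin n → Fin n → Fin n → Fin n → ℝ) (d b : Fin n → ℝ) (p : ℕ)
    (z : Fin n → Fin n → ℝ) (x : Fin n → Fin n → Fin n → Fin n → ℝ)
    (hz : QCpLPFeasible n d b p z) (hx : RL2Constraints n z x) :
    (∀ i j : Fin n, i < j → ∀ k m, x i k j m = z i k * z j m) ∧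
    RL2Objective n f c q z x = QFObjective n f c q z := by
  obtain ⟨hbin, hrow, -, -, -⟩ := hz
  obtain ⟨hpos, hsum1, hsum2⟩ := hx
  have hxeq : ∀ i j : Fin n, i < j → ∀ k m, x i k j m = z i k * z j m := by
    intro i j hij k m
    rcases hbin i k with h0 | h1
    · have hs := hsum2 i j hij k
      rw [h0] at hs
      have hz0 : x i k j m = 0 :=
        (Finset.sum_eq_zero_iff_of_nonneg (fun m' _ => hpos i j hij k m')).mp hs m
          (Finset.mem_univ m)
      rw [hz0, h0]; ring
    · have hz0 : ∀ k', k' ≠ k → z i k' = 0 := by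
        intro k' hk'
        rcases hbin i k' with h | h
        · exact h
        · exfalso
          have hr := hrow i
          have hle : ({k', k} : Finset (Fin n)).sum (z i) ≤ ∑ k'', z i k'' := by
            apply Finset.sum_le_sum_of_subset_of_nonneg (Finset.subset_univ _)
            intro t _ _
            rcases hbin i t with ht | ht <;> simp [ht]
          rw [Finset.sum_pair hk', h, h1, hr] at hle
          linarith
      have hx0 : ∀ k', k' ≠ k → x i k' j m = 0 := by
        intro k' hk'
        have hs := hsum2 i j hij k'
        rw [hz0 k' hk'] at hs
        exact (Finset.sum_eq_zero_iff_of_nonneg (fun m' _ => hpos i j hij k' m')).mp hs m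
          (Finset.mem_univ m)
      have hs := hsum1 i j hij m
      rw [Finset.sum_eq_single k (fun k' _ hk' => hx0 k' hk')
        (fun h => absurd (Finset.mem_univ k) h)] at hs
      rw [hs, h1, one_mul]
  refine ⟨hxeq, ?_⟩
  unfold RL2Objective QFObjective
  congr 1
  apply Finset.sum_congr rfl; intro i _
  apply Finset.sum_congr rfl; intro j hj
  apply Finset.sum_congr rfl; intro k _
  apply Finset.sum_congr rfl; intro m _
  rw [hxeq i j (Finset.mem_filter.mp hj).2 k m]

lemma rl2_construct
    (n : ℕ) (d b : Fin n → ℝ) (p : ℕ) (z : Fin n → Fin n → ℝ)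
    (hz : QCpLPFeasible n d b p z) :
    RL2Constraints n z (fun i k j m => z i k * z j m) := by
  obtain ⟨hbin, hrow, -, -, -⟩ := hz
  have hnn : ∀ i k, 0 ≤ z i k := by
    intro i k; rcases hbin i k with h | h <;> simp [h]
  refine ⟨fun i j _ k m => mul_nonneg (hnn i k) (hnn j m), ?_, ?_⟩
  · intro i j _ m
    rw [← Finset.sum_mul, hrow i, one_mul]
  · intro i j _ k
    rw [← Finset.mul_sum, hrow j, mul_one]

/-- For any feasible binary `z ∈ Z` and any `x` satisfying the `RL₂` constraints,
the flow constraints force `x_{ikjm} = z_{ik} z_{jm}`, hence the linearized objective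
equals the quadratic objective; consequently, when `Z` is nonempty, the optimal values
of `RL₂` and of the binary quadratic program QF coincide. -/
theorem rl2_equals_qf
    (n : ℕ) (f : Fin n → ℝ) (c : Fin n → Fin n → ℝ)
    (q : Fin n → Fin n → Fin n → Fin n → ℝ) (d b : Fin n → ℝ) (p : ℕ)
    (z : Fin n → Fin n → ℝ) (x : Fin n → Fin n → Fin n → Fin n → ℝ)
    (hz : QCpLPFeasible n d b p z) (hx : RL2Constraints n z x) :
    (∀ i j : Fin n, i < j → ∀ k m, x i k j m = z i k * z j m) ∧
    RL2Objective n f c q z x = QFObjective n f c q z ∧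
    ((∃ z', QCpLPFeasible n d b p z') →
      sInf {v : ℝ | ∃ z' x', QCpLPFeasible n d b p z' ∧ RL2Constraints n z' x' ∧
          v = RL2Objective n f c q z' x'} =
      sInf {v : ℝ | ∃ z', QCpLPFeasible n d b p z' ∧ v = QFObjective n f c q z'}) := by
  obtain ⟨h1, h2⟩ := rl2_aux n f c q d b p z x hz hx
  refine ⟨h1, h2, fun _ => ?_⟩
  congr 1
  ext v
  constructor
  · rintro ⟨z', x', hz', hx', rfl⟩
    exact ⟨z', hz', (rl2_aux n f c q d b p z' x' hz' hx').2⟩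
  · rintro ⟨z', hz', rfl⟩
    refine ⟨z', fun i k j m => z' i k * z' j m, hz', rl2_construct n d b p z' hz', ?_⟩
    exact (rl2_aux n f c q d b p z' _ hz' (rl2_construct n d b p z' hz')).2.symm
end

section
/- Validity of Benders optimality cuts: let N = Fin n, let q assign a real interaction cost q_{ikjm} to each i < j and k, m ∈ N, and let z : N × N → {0,1} satisfy ∑_{k∈N} z_{ik} = 1 for every i. Suppose for each pair i < j the vectors α^{ij}, β^{ij} : N → ℝ satisfy α^{ij}_m + β^{ij}_k ≤ q_{ikjm} for all k, m ∈ N. Then ∑_{i<j} ∑_{k,m} q_{ikjm} z_{ik} z_{jm} ≥ ∑_{i∈N} ∑_{k∈N} ( ∑_{j<i} α^{ji}_k + ∑_{j>i} β^{ij}_k ) z_{ik}. -/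
open Finset

lemma benders_pair (n : ℕ) (q : Fin n → Fin n → ℝ) (zi zj : Fin n → ℝ)
    (hzi0 : ∀ k, 0 ≤ zi k) (hzj0 : ∀ k, 0 ≤ zj k)
    (hzi : ∑ k, zi k = 1) (hzj : ∑ k, zj k = 1)
    (a b : Fin n → ℝ) (hd : ∀ k m, a m + b k ≤ q k m) :
    ∑ k, a k * zj k + ∑ k, b k * zi k ≤ ∑ k, ∑ m, q k m * (zi k * zj m) := by
  have key : ∑ k, ∑ m, (a m + b k) * (zi k * zj m) ≤
      ∑ k, ∑ m, q k m * (zi k * zj m) := by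
    refine Finset.sum_le_sum fun k _ => Finset.sum_le_sum fun m _ => ?_
    exact mul_le_mul_of_nonneg_right (hd k m) (mul_nonneg (hzi0 k) (hzj0 m))
  refine le_trans (le_of_eq ?_) key
  have e1 : ∑ k, ∑ m, (a m + b k) * (zi k * zj m)
      = ∑ k, ∑ m, (zi k * (a m * zj m)) + ∑ k, ∑ m, ((b k * zi k) * zj m) := by
    rw [← Finset.sum_add_distrib]
    refine Finset.sum_congr rfl fun k _ => ?_
    rw [← Finset.sum_add_distrib]
    refine Finset.sum_congr rfl fun m _ => ?_
    ring
  rw [e1, ← Finset.sum_mul_sum, ← Finset.sum_mul_sum, hzi, hzj]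
  ring

lemma benders_swap (n : ℕ) (f : Fin n → Fin n → ℝ) :
    ∑ i, ∑ j ∈ Finset.univ.filter (fun j => j < i), f j i
      = ∑ i, ∑ j ∈ Finset.univ.filter (fun j => i < j), f i j := by
  simp only [Finset.sum_filter]
  exact Finset.sum_comm

/-- Validity of Benders optimality cuts: for a binary assignment `z` with unit row sums
and dual feasible solutions `(α^{ij}, β^{ij})` of each subproblem `DS_{ij}` (`i < j`),
the aggregated cut value is a lower bound on the quadratic interaction cost. -/
theorem benders_optimality_cut_valid
    (n : ℕ) (q : Fin n → Fin n → Fin n → Fin n → ℝ)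
    (z : Fin n → Fin n → ℝ)
    (hz01 : ∀ i k, z i k = 0 ∨ z i k = 1)
    (hzsum : ∀ i, ∑ k, z i k = 1)
    (α β : Fin n → Fin n → Fin n → ℝ)
    (hdual : ∀ i j : Fin n, i < j → ∀ k m, α i j m + β i j k ≤ q i k j m) :
    ∑ i, ∑ k, (∑ j ∈ Finset.univ.filter (fun j => j < i), α j i k +
        ∑ j ∈ Finset.univ.filter (fun j => i < j), β i j k) * z i k ≤
      ∑ i, ∑ j ∈ Finset.univ.filter (fun j => i < j), ∑ k, ∑ m,
        q i k j m * (z i k * z j m) := by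
  have hz0 : ∀ i k, 0 ≤ z i k := fun i k => by rcases hz01 i k with h | h <;> simp [h]
  have split : ∑ i, ∑ k, (∑ j ∈ Finset.univ.filter (fun j => j < i), α j i k +
        ∑ j ∈ Finset.univ.filter (fun j => i < j), β i j k) * z i k
      = (∑ i, ∑ j ∈ Finset.univ.filter (fun j => j < i), ∑ k, α j i k * z i k)
        + ∑ i, ∑ j ∈ Finset.univ.filter (fun j => i < j), ∑ k, β i j k * z i k := by
    rw [← Finset.sum_add_distrib]
    refine Finset.sum_congr rfl fun i _ => ?_
    rw [← Finset.sum_comm (f := fun k j => α j i k * z i k),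
        ← Finset.sum_comm (f := fun k j => β i j k * z i k),
        ← Finset.sum_add_distrib]
    refine Finset.sum_congr rfl fun k _ => ?_
    rw [add_mul, Finset.sum_mul, Finset.sum_mul]
  have lhs_eq : ∑ i, ∑ k, (∑ j ∈ Finset.univ.filter (fun j => j < i), α j i k +
        ∑ j ∈ Finset.univ.filter (fun j => i < j), β i j k) * z i k
      = ∑ i, ∑ j ∈ Finset.univ.filter (fun j => i < j),
          (∑ k, α i j k * z j k + ∑ k, β i j k * z i k) := by
    rw [split, benders_swap n (fun i j => ∑ k, α i j k * z j k), ← Finset.sum_add_distrib]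
    refine Finset.sum_congr rfl fun i _ => ?_
    rw [← Finset.sum_add_distrib]
  rw [lhs_eq]
  refine Finset.sum_le_sum fun i _ => Finset.sum_le_sum fun j hj => ?_
  simp only [Finset.mem_filter] at hj
  exact benders_pair n (q i · j ·) (z i) (z j) (hz0 i) (hz0 j) (hzsum i) (hzsum j)
    (α i j) (β i j) (hdual i j hj.2)
end

section
/- Correctness of the Benders reformulation at integer points: let N = Fin n, let q assign a real cost q_{ikjm} to each i < j and k, m ∈ N, and let z : N × N → {0,1} satisfy ∑_{k∈N} z_{ik} = 1 for every i. Then the quadratic interaction cost ∑_{i<j} ∑_{k,m} q_{ikjm} z_{ik} z_{jm} equals the supremum, over all families {(α^{ij}, β^{ij})}_{i<j} with α^{ij}_m + β^{ij}_k ≤ q_{ikjm} for all k, m, of the cut value ∑_{i∈N} ∑_{k∈N} ( ∑_{j<i} α^{ji}_k + ∑_{j>i} β^{ij}_k ) z_{ik}; moreover this supremum is attained. Hence, at every binary z satisfying the assignment equalities, the smallest η satisfying all Benders optimality cuts equals the quadratic interaction cost, so the Benders reformulation BR has the same optimal value as the binary quadratic program QF. -/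
open Finset

/-- A family `(α^{ij}, β^{ij})`, `i < j`, of dual feasible solutions of the Benders
subproblems `DS_{ij}`. -/
def DualFeasibleFamily (n : ℕ) (q : Fin n → Fin n → Fin n → Fin n → ℝ)
    (α β : Fin n → Fin n → Fin n → ℝ) : Prop :=
  ∀ i j : Fin n, i < j → ∀ k m, α i j m + β i j k ≤ q i k j m

/-- The value of the Benders optimality cut generated by a dual family at `z`. -/
def BendersCutValue (n : ℕ) (z : Fin n → Fin n → ℝ)
    (α β : Fin n → Fin n → Fin n → ℝ) : ℝ :=
  ∑ i, ∑ k, (∑ j ∈ Finset.univ.filter (fun j => j < i), α j i k +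
      ∑ j ∈ Finset.univ.filter (fun j => i < j), β i j k) * z i k

/-- The set of Benders cut values at `z` over all dual feasible families. -/
def BendersCutValues (n : ℕ) (q : Fin n → Fin n → Fin n → Fin n → ℝ)
    (z : Fin n → Fin n → ℝ) : Set ℝ :=
  {v | ∃ α β, DualFeasibleFamily n q α β ∧ v = BendersCutValue n z α β}

/-- The quadratic interaction cost `∑_{i<j} ∑_{k,m} q_{ikjm} z_{ik} z_{jm}`. -/
def QuadCost (n : ℕ) (q : Fin n → Fin n → Fin n → Fin n → ℝ)
    (z : Fin n → Fin n → ℝ) : ℝ :=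
  ∑ i, ∑ j ∈ Finset.univ.filter (fun j => i < j), ∑ k, ∑ m,
    q i k j m * (z i k * z j m)

/-- Binary rows summing to one are indicator rows. -/
lemma benders_exists_indicator (n : ℕ) (z : Fin n → Fin n → ℝ)
    (hz01 : ∀ i k, z i k = 0 ∨ z i k = 1)
    (hzsum : ∀ i, ∑ k, z i k = 1) :
    ∃ σ : Fin n → Fin n, ∀ i k, z i k = if k = σ i then 1 else 0 := by
  have h : ∀ i, ∃ s, ∀ k, z i k = if k = s then 1 else 0 := by
    intro i
    have h1 : ∃ s, z i s = 1 := by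
      by_contra hc
      push_neg at hc
      have h0 : ∀ k, z i k = 0 := fun k => (hz01 i k).resolve_right (hc k)
      have := hzsum i
      rw [Finset.sum_eq_zero (fun k _ => h0 k)] at this
      norm_num at this
    obtain ⟨s, hs⟩ := h1
    refine ⟨s, fun k => ?_⟩
    by_cases hk : k = s
    · simp [hk, hs]
    · simp only [hk, if_false]
      have hrest : ∑ k' ∈ univ.erase s, z i k' = 0 := by
        have h2 := hzsum i
        rw [← Finset.add_sum_erase _ _ (mem_univ s), hs] at h2
        linarith
      exact (Finset.sum_eq_zero_iff_of_nonneg (fun k' _ => by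
        rcases hz01 i k' with h | h <;> simp [h])).mp hrest k (by simp [hk])
  choose σ hσ using h
  exact ⟨σ, hσ⟩

/-- Swap of order of summation over pairs `j < i`. -/
lemma benders_sum_lt_swap (n : ℕ) (F : Fin n → Fin n → ℝ) :
    ∑ i, ∑ j ∈ univ.filter (fun j => j < i), F j i =
    ∑ i, ∑ j ∈ univ.filter (fun j => i < j), F i j := by
  rw [Finset.sum_comm' (s' := fun j => univ.filter (fun i => j < i)) (t' := univ)]
  intro x y; simp

/-- The main lemma: at binary `z` with unit row sums, `QuadCost` is the greatest
Benders cut value. -/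
lemma benders_isGreatest (n : ℕ) (q : Fin n → Fin n → Fin n → Fin n → ℝ)
    (z : Fin n → Fin n → ℝ)
    (hz01 : ∀ i k, z i k = 0 ∨ z i k = 1)
    (hzsum : ∀ i, ∑ k, z i k = 1) :
    IsGreatest (BendersCutValues n q z) (QuadCost n q z) := by
  obtain ⟨σ, hσ⟩ := benders_exists_indicator n z hz01 hzsum
  -- formula for any cut value
  have hcut : ∀ α β : Fin n → Fin n → Fin n → ℝ,
      BendersCutValue n z α β =
        ∑ i, ∑ j ∈ univ.filter (fun j => i < j), (α i j (σ j) + β i j (σ i)) := by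
    intro α β
    have h1 : BendersCutValue n z α β =
        ∑ i, (∑ j ∈ univ.filter (fun j => j < i), α j i (σ i) +
          ∑ j ∈ univ.filter (fun j => i < j), β i j (σ i)) := by
      unfold BendersCutValue
      refine Finset.sum_congr rfl (fun i _ => ?_)
      simp [hσ, mul_ite]
    rw [h1, Finset.sum_add_distrib, benders_sum_lt_swap n (fun i j => α i j (σ j)),
      ← Finset.sum_add_distrib]
    exact Finset.sum_congr rfl fun i _ => (Finset.sum_add_distrib).symm
  -- formula for the quadratic cost
  have hquad : QuadCost n q z =
      ∑ i, ∑ j ∈ univ.filter (fun j => i < j), q i (σ i) j (σ j) := by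
    unfold QuadCost
    refine Finset.sum_congr rfl fun i _ => Finset.sum_congr rfl fun j _ => ?_
    simp [hσ, mul_ite, ite_mul]
  constructor
  · -- membership: construct an optimal dual family
    set S : Fin n → Fin n → ℝ := fun i j => ∑ k, ∑ m, |q i k j m| with hS
    have habs : ∀ i j k m, |q i k j m| ≤ S i j := by
      intro i j k m
      calc |q i k j m| ≤ ∑ m, |q i k j m| :=
            Finset.single_le_sum (f := fun m => |q i k j m|)
              (fun _ _ => abs_nonneg _) (mem_univ m)
        _ ≤ S i j :=
            Finset.single_le_sum (f := fun k => ∑ m, |q i k j m|)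
              (fun _ _ => Finset.sum_nonneg fun _ _ => abs_nonneg _) (mem_univ k)
    refine ⟨fun i j m => q i (σ i) j m,
      fun i j k => if k = σ i then 0 else -(2 * S i j), ?_, ?_⟩
    · intro i j _ k m
      by_cases hk : k = σ i
      · simp [hk]
      · simp only [hk, if_false]
        have h1 := habs i j (σ i) m
        have h2 := habs i j k m
        have h3 := le_abs_self (q i (σ i) j m)
        have h4 := neg_abs_le (q i k j m)
        linarith
    · rw [hcut, hquad]
      refine Finset.sum_congr rfl fun i _ => Finset.sum_congr rfl fun j _ => ?_
      simp
  · -- upper bound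
    rintro v ⟨α, β, hfeas, rfl⟩
    rw [hcut, hquad]
    refine Finset.sum_le_sum fun i _ => Finset.sum_le_sum fun j hj => ?_
    exact hfeas i j (by simpa using hj) (σ i) (σ j)

/-- If `S2 ⊆ S1` and every element of `S1` dominates some element of `S2`, the infima agree. -/
lemma benders_sInf_eq (S1 S2 : Set ℝ) (hsub : S2 ⊆ S1)
    (hle : ∀ v ∈ S1, ∃ w ∈ S2, w ≤ v) : sInf S1 = sInf S2 := by
  rcases Set.eq_empty_or_nonempty S1 with h1 | h1
  · have h2 : S2 = ∅ := Set.eq_empty_of_subset_empty (h1 ▸ hsub)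
    rw [h1, h2]
  · obtain ⟨v, hv⟩ := h1
    obtain ⟨w, hw, hwv⟩ := hle v hv
    by_cases hb : BddBelow S2
    · have hb1 : BddBelow S1 := by
        obtain ⟨b, hbb⟩ := hb
        exact ⟨b, fun x hx => by
          obtain ⟨y, hy, hyx⟩ := hle x hx; exact (hbb hy).trans hyx⟩
      refine le_antisymm (le_csInf ⟨w, hw⟩ fun x hx => csInf_le hb1 (hsub hx))
        (le_csInf ⟨v, hv⟩ fun x hx => ?_)
      obtain ⟨y, hy, hyx⟩ := hle x hx
      exact (csInf_le hb hy).trans hyx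
    · have hb1 : ¬BddBelow S1 := fun h => hb (h.mono hsub)
      rw [csInf_of_not_bddBelow hb1, csInf_of_not_bddBelow hb]

/-- Correctness of the Benders reformulation at integer points: for binary `z` with unit
row sums, the quadratic interaction cost is the (attained) supremum of the Benders cut
values, the smallest `η` satisfying all Benders optimality cuts equals the quadratic
cost, and hence the Benders reformulation BR has the same optimal value as QF. -/
theorem benders_reformulation_correct
    (n : ℕ) (q : Fin n → Fin n → Fin n → Fin n → ℝ)
    (z : Fin n → Fin n → ℝ)
    (hz01 : ∀ i k, z i k = 0 ∨ z i k = 1)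
    (hzsum : ∀ i, ∑ k, z i k = 1) :
    IsGreatest (BendersCutValues n q z) (QuadCost n q z) ∧
    IsLeast {η : ℝ | ∀ v ∈ BendersCutValues n q z, v ≤ η} (QuadCost n q z) ∧
    (∀ (f : Fin n → ℝ) (c : Fin n → Fin n → ℝ) (d bb : Fin n → ℝ) (p : ℕ),
      sInf {v : ℝ | ∃ (z' : Fin n → Fin n → ℝ) (η : ℝ), QCpLPFeasible n d bb p z' ∧
          (∀ α β, DualFeasibleFamily n q α β → BendersCutValue n z' α β ≤ η) ∧
          v = ∑ k, f k * z' k k + ∑ i, ∑ k, c i k * z' i k + η} =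
      sInf {v : ℝ | ∃ z', QCpLPFeasible n d bb p z' ∧
          v = ∑ k, f k * z' k k + ∑ i, ∑ k, c i k * z' i k + QuadCost n q z'}) := by
  have hgr := benders_isGreatest n q z hz01 hzsum
  refine ⟨hgr, ⟨hgr.2, fun η hη => hη _ hgr.1⟩, ?_⟩
  intro f c d bb p
  apply benders_sInf_eq
  · -- S2 ⊆ S1
    rintro v ⟨z', hz', rfl⟩
    have hgr' := benders_isGreatest n q z' hz'.1 hz'.2.1
    refine ⟨z', QuadCost n q z', hz', fun α β hfeas => hgr'.2 ⟨α, β, hfeas, rfl⟩, rfl⟩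
  · -- every element of S1 dominates an element of S2
    rintro v ⟨z', η, hz', hη, rfl⟩
    have hgr' := benders_isGreatest n q z' hz'.1 hz'.2.1
    obtain ⟨α, β, hfeas, hval⟩ := hgr'.1
    have hq : QuadCost n q z' ≤ η := hval ▸ hη α β hfeas
    exact ⟨_, ⟨z', hz', rfl⟩, by linarith⟩
end

section
/- Monotonicity of the parametric Benders objective (upper-increment half of the δ-optimality proposition): let N be a finite set, q : N × N → ℝ, let ā, b̄, a⁰, b⁰ : N → ℝ be nonnegative with ∑_k ā_k = ∑_m b̄_m and ∑_k a⁰_k = ∑_m b⁰_m, and let Γ = T(ā, b̄). Then for all 0 ≤ δ ≤ δ', T(a⁰ + δ'·ā, b⁰ + δ'·b̄) ≤ T(a⁰ + δ·ā, b⁰ + δ·b̄) + (δ' − δ)·Γ; that is, the function g(δ) = T(a⁰ + δ·ā, b⁰ + δ·b̄) − Γ·δ is nonincreasing on [0, ∞). -/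
open Finset

/-- The transportation polytope `P(a,b)`. -/
def transportPolytope {N : Type*} [Fintype N] (a b : N → ℝ) : Set (N → N → ℝ) :=
  {x | (∀ k m, 0 ≤ x k m) ∧ (∀ k, ∑ m, x k m = a k) ∧ (∀ m, ∑ k, x k m = b m)}

/-- The transportation value `T(a,b)`. -/
noncomputable def transportValue {N : Type*} [Fintype N]
    (q : N → N → ℝ) (a b : N → ℝ) : ℝ :=
  sInf {v | ∃ x ∈ transportPolytope a b, v = ∑ k, ∑ m, q k m * x k m}

section Aux

variable {N : Type*} [Fintype N] (q : N → N → ℝ)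

def vset (a b : N → ℝ) : Set ℝ :=
  {v | ∃ x ∈ transportPolytope a b, v = ∑ k, ∑ m, q k m * x k m}

lemma tp_nonempty (a b : N → ℝ) (ha : ∀ k, 0 ≤ a k) (hb : ∀ m, 0 ≤ b m)
    (hs : ∑ k, a k = ∑ m, b m) : ∃ x, x ∈ transportPolytope a b := by
  by_cases hS : ∑ k, a k = 0
  · have ha' : ∀ k, a k = 0 := fun k =>
      (Finset.sum_eq_zero_iff_of_nonneg (fun i _ => ha i)).mp hS k (mem_univ k)
    have hb' : ∀ m, b m = 0 := fun m =>
      (Finset.sum_eq_zero_iff_of_nonneg (fun i _ => hb i)).mp (hs ▸ hS) m (mem_univ m)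
    exact ⟨0, fun k m => le_rfl, fun k => by simp [ha' k], fun m => by simp [hb' m]⟩
  · have hS' : 0 < ∑ k, a k := lt_of_le_of_ne (Finset.sum_nonneg fun i _ => ha i) (Ne.symm hS)
    refine ⟨fun k m => a k * b m / (∑ j, a j), fun k m => div_nonneg (mul_nonneg (ha k) (hb m)) hS'.le, fun k => ?_, fun m => ?_⟩
    · rw [← Finset.sum_div, ← Finset.mul_sum, ← hs]
      field_simp
    · rw [← Finset.sum_div, ← Finset.sum_mul, hs]
      rw [hs] at hS'
      field_simp

lemma vset_nonempty (a b : N → ℝ) (ha : ∀ k, 0 ≤ a k) (hb : ∀ m, 0 ≤ b m)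
    (hs : ∑ k, a k = ∑ m, b m) : (vset q a b).Nonempty := by
  obtain ⟨x, hx⟩ := tp_nonempty a b ha hb hs
  exact ⟨_, x, hx, rfl⟩

lemma vset_bdd (a b : N → ℝ) : BddBelow (vset q a b) := by
  refine ⟨-(∑ k, ∑ m, |q k m|) * (∑ k, a k), ?_⟩
  rintro v ⟨x, ⟨hx0, hxa, hxb⟩, rfl⟩
  have hA : ∀ k, 0 ≤ a k := fun k => (hxa k) ▸ Finset.sum_nonneg fun m _ => hx0 k m
  have hx_le : ∀ k m, x k m ≤ ∑ j, a j := by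
    intro k m
    have h1 : x k m ≤ a k := (hxa k) ▸ Finset.single_le_sum (fun m _ => hx0 k m) (mem_univ m)
    exact h1.trans (Finset.single_le_sum (fun j _ => hA j) (mem_univ k))
  have key : ∀ k m, -(|q k m| * (∑ j, a j)) ≤ q k m * x k m := by
    intro k m
    nlinarith [mul_nonneg (by linarith [neg_abs_le (q k m)] : (0:ℝ) ≤ q k m + |q k m|) (hx0 k m),
      mul_nonneg (abs_nonneg (q k m)) (sub_nonneg.mpr (hx_le k m))]
  calc -(∑ k, ∑ m, |q k m|) * (∑ j, a j)
      = ∑ k, ∑ m, -(|q k m| * (∑ j, a j)) := by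
        simp [Finset.sum_mul, neg_mul]
    _ ≤ ∑ k, ∑ m, q k m * x k m :=
        Finset.sum_le_sum fun k _ => Finset.sum_le_sum fun m _ => key k m

lemma tv_add (a b a' b' : N → ℝ)
    (h1 : (vset q a b).Nonempty) (h2 : (vset q a' b').Nonempty) :
    transportValue q (fun k => a k + a' k) (fun m => b m + b' m) ≤
      transportValue q a b + transportValue q a' b' := by
  have hbdd := vset_bdd q (fun k => a k + a' k) (fun m => b m + b' m)
  have step : ∀ v1 ∈ vset q a b, ∀ v2 ∈ vset q a' b',
      transportValue q (fun k => a k + a' k) (fun m => b m + b' m) ≤ v1 + v2 := by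
    rintro _ ⟨x, ⟨hx0, hxa, hxb⟩, rfl⟩ _ ⟨y, ⟨hy0, hya, hyb⟩, rfl⟩
    refine csInf_le hbdd ⟨fun k m => x k m + y k m,
      ⟨fun k m => add_nonneg (hx0 k m) (hy0 k m),
        fun k => by rw [Finset.sum_add_distrib, hxa, hya],
        fun m => by rw [Finset.sum_add_distrib, hxb, hyb]⟩, ?_⟩
    rw [← Finset.sum_add_distrib]
    exact Finset.sum_congr rfl fun k _ => by
      rw [← Finset.sum_add_distrib]
      exact Finset.sum_congr rfl fun m _ => by ring
  have h3 : ∀ v2 ∈ vset q a' b',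
      transportValue q (fun k => a k + a' k) (fun m => b m + b' m) ≤ transportValue q a b + v2 := by
    intro v2 hv2
    have : transportValue q (fun k => a k + a' k) (fun m => b m + b' m) - v2 ≤
        transportValue q a b :=
      le_csInf h1 fun v1 hv1 => by linarith [step v1 hv1 v2 hv2]
    linarith
  have : transportValue q (fun k => a k + a' k) (fun m => b m + b' m) - transportValue q a b ≤
      transportValue q a' b' :=
    le_csInf h2 fun v2 hv2 => by linarith [h3 v2 hv2]
  linarith

lemma tv_smul (a b : N → ℝ) (c : ℝ) (hc : 0 ≤ c) (h1 : (vset q a b).Nonempty) :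
    transportValue q (fun k => c * a k) (fun m => c * b m) ≤ c * transportValue q a b := by
  have hbdd := vset_bdd q (fun k => c * a k) (fun m => c * b m)
  have step : ∀ v ∈ vset q a b,
      transportValue q (fun k => c * a k) (fun m => c * b m) ≤ c * v := by
    rintro _ ⟨x, ⟨hx0, hxa, hxb⟩, rfl⟩
    refine csInf_le hbdd ⟨fun k m => c * x k m,
      ⟨fun k m => mul_nonneg hc (hx0 k m),
        fun k => by rw [← Finset.mul_sum, hxa],
        fun m => by rw [← Finset.mul_sum, hxb]⟩, ?_⟩
    rw [Finset.mul_sum]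
    exact Finset.sum_congr rfl fun k _ => by
      rw [Finset.mul_sum]
      exact Finset.sum_congr rfl fun m _ => by ring
  rcases eq_or_lt_of_le hc with hc0 | hc0
  · obtain ⟨v, hv⟩ := h1
    have := step v hv
    rw [← hc0] at this ⊢
    simpa using this
  · have : transportValue q (fun k => c * a k) (fun m => c * b m) / c ≤
        transportValue q a b :=
      le_csInf h1 fun v hv => by
        rw [div_le_iff₀ hc0]
        linarith [step v hv, mul_comm c v]
    rw [div_le_iff₀ hc0] at this
    linarith [mul_comm (transportValue q a b) c]

end Aux

/-- Monotonicity of the parametric Benders objective: with `Γ = T(ā, b̄)`, for all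
`0 ≤ δ ≤ δ'` we have `T(a⁰ + δ'·ā, b⁰ + δ'·b̄) ≤ T(a⁰ + δ·ā, b⁰ + δ·b̄) + (δ' − δ)·Γ`;
that is, `g(δ) = T(a⁰ + δ·ā, b⁰ + δ·b̄) − Γ·δ` is nonincreasing on `[0, ∞)`. -/
theorem parametric_benders_objective_antitone
    {N : Type*} [Fintype N] (q : N → N → ℝ) (abar bbar a0 b0 : N → ℝ)
    (habar : ∀ k, 0 ≤ abar k) (hbbar : ∀ m, 0 ≤ bbar m)
    (ha0 : ∀ k, 0 ≤ a0 k) (hb0 : ∀ m, 0 ≤ b0 m)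
    (habars : ∑ k, abar k = ∑ m, bbar m)
    (ha0s : ∑ k, a0 k = ∑ m, b0 m) :
    (∀ δ δ' : ℝ, 0 ≤ δ → δ ≤ δ' →
      transportValue q (fun k => a0 k + δ' * abar k) (fun m => b0 m + δ' * bbar m) ≤
        transportValue q (fun k => a0 k + δ * abar k) (fun m => b0 m + δ * bbar m) +
          (δ' - δ) * transportValue q abar bbar) ∧
    AntitoneOn (fun δ : ℝ =>
        transportValue q (fun k => a0 k + δ * abar k) (fun m => b0 m + δ * bbar m) -
          transportValue q abar bbar * δ)
      (Set.Ici (0 : ℝ)) := by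
  have key : ∀ δ δ' : ℝ, 0 ≤ δ → δ ≤ δ' →
      transportValue q (fun k => a0 k + δ' * abar k) (fun m => b0 m + δ' * bbar m) ≤
        transportValue q (fun k => a0 k + δ * abar k) (fun m => b0 m + δ * bbar m) +
          (δ' - δ) * transportValue q abar bbar := by
    intro δ δ' hδ hle
    have hc : 0 ≤ δ' - δ := by linarith
    have h1 : (vset q (fun k => a0 k + δ * abar k) (fun m => b0 m + δ * bbar m)).Nonempty :=
      vset_nonempty q _ _ (fun k => by nlinarith [ha0 k, habar k])
        (fun m => by nlinarith [hb0 m, hbbar m])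
        (by simp only [Finset.sum_add_distrib, ← Finset.mul_sum, ha0s, habars])
    have hbar : (vset q abar bbar).Nonempty := vset_nonempty q _ _ habar hbbar habars
    have h2 : (vset q (fun k => (δ' - δ) * abar k) (fun m => (δ' - δ) * bbar m)).Nonempty :=
      vset_nonempty q _ _ (fun k => mul_nonneg hc (habar k)) (fun m => mul_nonneg hc (hbbar m))
        (by simp only [← Finset.mul_sum, habars])
    have hfun1 : (fun k => a0 k + δ' * abar k) =
        fun k => (a0 k + δ * abar k) + ((δ' - δ) * abar k) := funext fun k => by ring
    have hfun2 : (fun m => b0 m + δ' * bbar m) =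
        fun m => (b0 m + δ * bbar m) + ((δ' - δ) * bbar m) := funext fun m => by ring
    rw [hfun1, hfun2]
    calc transportValue q (fun k => (a0 k + δ * abar k) + ((δ' - δ) * abar k))
          (fun m => (b0 m + δ * bbar m) + ((δ' - δ) * bbar m))
        ≤ transportValue q (fun k => a0 k + δ * abar k) (fun m => b0 m + δ * bbar m) +
            transportValue q (fun k => (δ' - δ) * abar k) (fun m => (δ' - δ) * bbar m) :=
          tv_add q _ _ _ _ h1 h2
      _ ≤ _ := by
          have := tv_smul q abar bbar (δ' - δ) hc hbar
          linarith
  refine ⟨key, ?_⟩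
  intro δ hδ δ' hδ' hle
  have h := key δ δ' hδ hle
  simp only [Set.mem_Ici] at hδ hδ'
  have : (δ' - δ) * transportValue q abar bbar =
      transportValue q abar bbar * δ' - transportValue q abar bbar * δ := by ring
  simp only
  linarith
end
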